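/- Let f be a discrete Morse-Bott function on a finite abstract simplicial complex K, let I = C^red be an isolated invariant set (a nonempty reduced collection that is not a noncritical pair) with index pair (N, E). Then for every k, dim H_k(N, E; ℤ/2) = b_k(C^red), the k-th mod-2 Betti number of the reduced boundary complex of C^red; equivalently, the homological Conley index C_t(I) equals the Poincaré polynomial P_t(C^red). -/

import Mathlib

/-!
The relative chain complex of the index pair `(N, E)` has basis `N \ E`, and this set is
exactly `C^red`, so the two homologies coincide. The point is that every face of a reduced
cell `τ` has value at most `f τ`: a facet with a larger value would make `τ` downward
noncritical, and a face `σ` of codimension at least two with a larger value would have two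
distinct cofaces between `σ` and `τ`, both of smaller value than `σ`, contradicting the
Morse-Bott condition on the collection of `σ`.
-/

open Finset

noncomputable section
open scoped Classical

/-- `σ` is a facet of `τ`: `σ ⊆ τ` and `dim σ = dim τ − 1`. -/
def Facet (σ τ : Finset ℕ) : Prop := σ ⊆ τ ∧ σ.card + 1 = τ.card

/-- A finite abstract simplicial complex: a finite family of nonempty finite sets
closed under taking nonempty subsets. -/
def IsComplex (K : Finset (Finset ℕ)) : Prop :=
  (∀ σ ∈ K, σ.Nonempty) ∧ ∀ σ ∈ K, ∀ ν, ν ⊆ σ → ν.Nonempty → ν ∈ K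

/-- The closure of a set of cells: all nonempty subsets of its cells. -/
def closureOf (S : Finset (Finset ℕ)) : Finset (Finset ℕ) :=
  S.biUnion fun σ => σ.powerset.filter fun ν => ν ≠ ∅

/-- The graph on `C` joining two cells whenever their closures intersect is connected. -/
def ConnectedOn (C : Finset (Finset ℕ)) : Prop :=
  ∀ a ∈ C, ∀ b ∈ C,
    Relation.ReflTransGen
      (fun x y => x ∈ C ∧ y ∈ C ∧ (closureOf {x} ∩ closureOf {y}).Nonempty) a b

/-- A nonempty set of cells of `K`, all with the same `f`-value, whose
closure-intersection graph is connected. -/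
def IsPreCollection (K : Finset (Finset ℕ)) (f : Finset ℕ → ℝ) (C : Finset (Finset ℕ)) :
    Prop :=
  C ⊆ K ∧ C.Nonempty ∧ (∀ σ ∈ C, ∀ τ ∈ C, f σ = f τ) ∧ ConnectedOn C

/-- A collection for `f`: a maximal constant-value connected set of cells. -/
def IsCollection (K : Finset (Finset ℕ)) (f : Finset ℕ → ℝ) (C : Finset (Finset ℕ)) :
    Prop :=
  IsPreCollection K f C ∧ ∀ C', IsPreCollection K f C' → C ⊆ C' → C' = C

/-- `#{τ ∉ C : σ < τ, f(τ) < f(σ)}`. -/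
def UpCount (K : Finset (Finset ℕ)) (f : Finset ℕ → ℝ) (C : Finset (Finset ℕ))
    (σ : Finset ℕ) : ℕ :=
  (K.filter fun τ => τ ∉ C ∧ Facet σ τ ∧ f τ < f σ).card

/-- `#{ν ∉ C : ν < σ, f(ν) > f(σ)}`. -/
def DownCount (K : Finset (Finset ℕ)) (f : Finset ℕ → ℝ) (C : Finset (Finset ℕ))
    (σ : Finset ℕ) : ℕ :=
  (K.filter fun ν => ν ∉ C ∧ Facet ν σ ∧ f σ < f ν).card

/-- A discrete Morse-Bott function on `K`. -/
def IsMorseBott (K : Finset (Finset ℕ)) (f : Finset ℕ → ℝ) : Prop :=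
  ∀ C, IsCollection K f C → ∀ σ ∈ C, UpCount K f C σ ≤ 1 ∧ DownCount K f C σ ≤ 1

/-- `σ` is upward noncritical w.r.t. `C`. -/
def UpNoncrit (K : Finset (Finset ℕ)) (f : Finset ℕ → ℝ) (C : Finset (Finset ℕ))
    (σ : Finset ℕ) : Prop :=
  ∃ w ∈ K, w ∉ C ∧ Facet σ w ∧ f w < f σ

/-- `σ` is downward noncritical w.r.t. `C`. -/
def DownNoncrit (K : Finset (Finset ℕ)) (f : Finset ℕ → ℝ) (C : Finset (Finset ℕ))
    (σ : Finset ℕ) : Prop :=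
  ∃ w ∈ K, w ∉ C ∧ Facet w σ ∧ f σ < f w

/-- The reduced collection `C^red`: the cells of `C` that are neither upward nor
downward noncritical w.r.t. `C`. -/
def reducedOf (K : Finset (Finset ℕ)) (f : Finset ℕ → ℝ) (C : Finset (Finset ℕ)) :
    Finset (Finset ℕ) :=
  C.filter fun σ => ¬ UpNoncrit K f C σ ∧ ¬ DownNoncrit K f C σ

/-- A noncritical pair: a two-element set `{σ, τ}` with `σ < τ` and `f σ ≥ f τ`. -/
def IsNoncritPair (f : Finset ℕ → ℝ) (S : Finset (Finset ℕ)) : Prop :=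
  ∃ σ τ, Facet σ τ ∧ f τ ≤ f σ ∧ S = {σ, τ}

/-- A discrete Morse function in Forman's sense. -/
def IsDiscreteMorse (K : Finset (Finset ℕ)) (g : Finset ℕ → ℝ) : Prop :=
  ∀ σ ∈ K, (K.filter fun τ => Facet σ τ ∧ g τ ≤ g σ).card ≤ 1 ∧
    (K.filter fun ν => Facet ν σ ∧ g σ ≤ g ν).card ≤ 1

/-- A critical cell of `g`. -/
def IsCritical (K : Finset (Finset ℕ)) (g : Finset ℕ → ℝ) (σ : Finset ℕ) : Prop :=
  σ ∈ K ∧ (K.filter fun τ => Facet σ τ ∧ g τ ≤ g σ).card = 0 ∧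
    (K.filter fun ν => Facet ν σ ∧ g σ ≤ g ν).card = 0

/-- The `k`-dimensional cells of `S`. -/
def cells (S : Finset (Finset ℕ)) (k : ℕ) : Finset (Finset ℕ) :=
  S.filter fun σ => σ.card = k + 1

/-- The `ℤ/2`-vector space with basis the `k`-dimensional cells of `S`. -/
abbrev Chain (S : Finset (Finset ℕ)) (k : ℕ) : Type :=
  ↥(cells S k) → ZMod 2

/-- The boundary operator `C_k(S) → C_j(S)` (used with `j = k − 1`), sending each
`k`-cell of `S` to the sum of those of its facets that lie in `S`. -/
def bdry (S : Finset (Finset ℕ)) (j k : ℕ) : Chain S k →ₗ[ZMod 2] Chain S j :=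
  Matrix.mulVecLin (Matrix.of fun (ν : ↥(cells S j)) (τ : ↥(cells S k)) =>
    if Facet ν.1 τ.1 then (1 : ZMod 2) else 0)

/-- `b_k(S) = dim (ker ∂_k / im ∂_{k+1})`, the `k`-th mod-2 Betti number of the
boundary complex of `S`. -/
def bettiOf (S : Finset (Finset ℕ)) (k : ℕ) : ℕ :=
  Module.finrank (ZMod 2)
    (↥(LinearMap.ker (bdry S (k - 1) k)) ⧸
      Submodule.comap (LinearMap.ker (bdry S (k - 1) k)).subtype
        (LinearMap.range (bdry S k (k + 1))))

/-- The Poincaré polynomial `P_t(S) = Σ_k b_k(S) t^k`. -/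
def PtOf (S : Finset (Finset ℕ)) : Polynomial ℕ :=
  ∑ k ∈ Finset.range (S.sup Finset.card), Polynomial.C (bettiOf S k) * Polynomial.X ^ k

/-- `dim H_k(N, E; ℤ/2)`: the homology of the quotient chain complex
`C_*(N)/C_*(E)`, computed via the relative chain complex with basis the cells of
`N \ E` (the image of the basis of `C_k(N)` in the quotient) and the induced
boundary. -/
def relBetti (N E : Finset (Finset ℕ)) (k : ℕ) : ℕ := bettiOf (N \ E) k

/-- The relative Poincaré polynomial `Σ_k dim H_k(N, E; ℤ/2) t^k`. -/
def relPt (N E : Finset (Finset ℕ)) : Polynomial ℕ := PtOf (N \ E)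

/-- The Euler characteristic `Σ_k (−1)^k dim H_k(S; ℤ/2)`. -/
def eulerOf (S : Finset (Finset ℕ)) : ℤ :=
  ∑ k ∈ Finset.range (S.sup Finset.card), (-1 : ℤ) ^ k * bettiOf S k

/-- The relative Euler characteristic `χ(N, E) = Σ_k (−1)^k dim H_k(N, E; ℤ/2)`. -/
def relEuler (N E : Finset (Finset ℕ)) : ℤ :=
  ∑ k ∈ Finset.range ((N \ E).sup Finset.card), (-1 : ℤ) ^ k * relBetti N E k

theorem mem_closureOf {S : Finset (Finset ℕ)} {ν : Finset ℕ} :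
    ν ∈ closureOf S ↔ ∃ σ ∈ S, ν ⊆ σ ∧ ν.Nonempty := by
  simp only [closureOf, mem_biUnion, mem_filter, mem_powerset, ne_eq,
    ← nonempty_iff_ne_empty]

theorem isPreCollection_singleton {K : Finset (Finset ℕ)} (f : Finset ℕ → ℝ) {σ : Finset ℕ}
    (hσ : σ ∈ K) : IsPreCollection K f {σ} := by
  refine ⟨singleton_subset_iff.mpr hσ, singleton_nonempty σ, ?_, ?_⟩
  · intro a ha b hb
    rw [mem_singleton.mp ha, mem_singleton.mp hb]
  · intro a ha b hb
    rw [mem_singleton.mp ha, mem_singleton.mp hb]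

theorem exists_isCollection_mem {K : Finset (Finset ℕ)} (f : Finset ℕ → ℝ) {σ : Finset ℕ}
    (hσ : σ ∈ K) : ∃ D, IsCollection K f D ∧ σ ∈ D := by
  set S := K.powerset.filter fun D => IsPreCollection K f D ∧ σ ∈ D
  have hS : S.Nonempty := ⟨{σ}, mem_filter.mpr
    ⟨mem_powerset.mpr (singleton_subset_iff.mpr hσ), isPreCollection_singleton f hσ,
      mem_singleton_self σ⟩⟩
  obtain ⟨D, hDS, hmax⟩ := S.exists_max_image card hS
  obtain ⟨-, hD, hσD⟩ := mem_filter.mp hDS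
  refine ⟨D, ⟨hD, fun D' hD' hDD' => ?_⟩, hσD⟩
  have hD'S : D' ∈ S := mem_filter.mpr ⟨mem_powerset.mpr hD'.1, hD', hDD' hσD⟩
  exact (eq_of_subset_of_card_le hDD' (hmax D' hD'S)).symm

theorem IsMorseBott.eq_of_facet_of_lt {K : Finset (Finset ℕ)} {f : Finset ℕ → ℝ}
    (hf : IsMorseBott K f) {σ w₁ w₂ : Finset ℕ} (hσ : σ ∈ K) (hw₁ : w₁ ∈ K) (hw₂ : w₂ ∈ K)
    (h₁ : Facet σ w₁) (h₂ : Facet σ w₂) (hlt₁ : f w₁ < f σ) (hlt₂ : f w₂ < f σ) :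
    w₁ = w₂ := by
  obtain ⟨D, hD, hσD⟩ := exists_isCollection_mem f hσ
  have hmem : ∀ w ∈ K, Facet σ w → f w < f σ →
      w ∈ K.filter fun τ => τ ∉ D ∧ Facet σ τ ∧ f τ < f σ := fun w hw hσw hlt =>
    mem_filter.mpr ⟨hw, fun hwD => hlt.ne (hD.1.2.2.1 w hwD σ hσD), hσw, hlt⟩
  exact card_le_one.mp (hf D hD σ hσD).1 _ (hmem w₁ hw₁ h₁ hlt₁) _ (hmem w₂ hw₂ h₂ hlt₂)

theorem le_of_facet_of_mem_reducedOf {K : Finset (Finset ℕ)} {f : Finset ℕ → ℝ}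
    {C : Finset (Finset ℕ)} (hC : ∀ σ ∈ C, ∀ τ ∈ C, f σ = f τ) {σ τ : Finset ℕ}
    (hτ : τ ∈ reducedOf K f C) (hσ : σ ∈ K) (hστ : Facet σ τ) : f σ ≤ f τ := by
  obtain ⟨hτC, -, hτdown⟩ := mem_filter.mp hτ
  by_contra! hlt
  exact hτdown ⟨σ, hσ, fun hσC => hlt.ne' (hC σ hσC τ hτC), hστ, hlt⟩

theorem le_of_subset_of_mem_reducedOf {K : Finset (Finset ℕ)} (hK : IsComplex K)
    {f : Finset ℕ → ℝ} (hf : IsMorseBott K f) {C : Finset (Finset ℕ)}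
    (hC : IsPreCollection K f C) {σ τ : Finset ℕ} (hτ : τ ∈ reducedOf K f C)
    (hστ : σ ⊆ τ) (hσ : σ.Nonempty) : f σ ≤ f τ := by
  have hτK : τ ∈ K := hC.1 (mem_filter.mp hτ).1
  obtain ⟨d, hd⟩ : ∃ d, (τ \ σ).card = d := ⟨_, rfl⟩
  induction d using Nat.strong_induction_on generalizing σ with
  | _ d ih =>
    have hσK : σ ∈ K := hK.2 τ hτK σ hστ hσ
    have hcard : (τ \ σ).card = τ.card - σ.card := card_sdiff_of_subset hστ
    have hle : σ.card ≤ τ.card := card_le_card hστ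
    match d, hd with
    | 0, hd =>
      rw [subset_antisymm hστ (sdiff_eq_empty_iff_subset.mp (card_eq_zero.mp hd))]
    | 1, hd =>
      exact le_of_facet_of_mem_reducedOf hC.2.2.1 hτ hσK ⟨hστ, by omega⟩
    | d + 2, hd =>
      by_contra! hlt
      obtain ⟨x, hx, y, hy, hxy⟩ := one_lt_card.mp (show 1 < (τ \ σ).card by omega)
      have hcoface : ∀ z ∈ τ \ σ, insert z σ ∈ K ∧ Facet σ (insert z σ) ∧
          f (insert z σ) < f σ := by
        intro z hz
        obtain ⟨hzτ, hzσ⟩ := mem_sdiff.mp hz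
        have hzστ : insert z σ ⊆ τ := insert_subset hzτ hστ
        have hle' : f (insert z σ) ≤ f τ := ih (d + 1) (by omega) hzστ (insert_nonempty z σ)
          (by rw [sdiff_insert, card_erase_of_mem hz, hd]; rfl)
        exact ⟨hK.2 τ hτK _ hzστ (insert_nonempty z σ),
          ⟨subset_insert z σ, (card_insert_of_notMem hzσ).symm⟩, hle'.trans_lt hlt⟩
      obtain ⟨hxK, hσx, hltx⟩ := hcoface x hx
      obtain ⟨hyK, hσy, hlty⟩ := hcoface y hy
      have hinsert := hf.eq_of_facet_of_lt hσK hxK hyK hσx hσy hltx hlty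
      have hxyσ : x ∈ insert y σ := hinsert ▸ mem_insert_self x σ
      rcases mem_insert.mp hxyσ with rfl | hxσ
      · exact hxy rfl
      · exact (mem_sdiff.mp hx).2 hxσ

theorem closureOf_reducedOf_sdiff_exit {K : Finset (Finset ℕ)} (hK : IsComplex K)
    {f : Finset ℕ → ℝ} (hf : IsMorseBott K f) {C : Finset (Finset ℕ)}
    (hC : IsPreCollection K f C) {v : ℝ} (hv : ∀ τ ∈ C, f τ = v) :
    closureOf (reducedOf K f C) \
        (closureOf (reducedOf K f C)).filter (fun σ => σ ∉ reducedOf K f C ∧ f σ ≤ v) =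
      reducedOf K f C := by
  ext σ
  simp only [mem_sdiff, mem_filter, mem_closureOf, not_and]
  constructor
  · rintro ⟨⟨τ, hτ, hστ, hσ⟩, hexit⟩
    by_contra hσI
    refine hexit ⟨τ, hτ, hστ, hσ⟩ hσI ?_
    rw [← hv τ (mem_filter.mp hτ).1]
    exact le_of_subset_of_mem_reducedOf hK hf hC hτ hστ hσ
  · intro hσ
    exact ⟨⟨σ, hσ, subset_rfl, hK.1 σ (hC.1 (mem_filter.mp hσ).1)⟩, fun _ h => absurd hσ h⟩

theorem statement16_general (K : Finset (Finset ℕ)) (hK : IsComplex K) (f : Finset ℕ → ℝ)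
    (hf : IsMorseBott K f) (C : Finset (Finset ℕ)) (hC : IsCollection K f C)
    (v : ℝ) (hv : ∀ τ ∈ C, f τ = v) :
    let I := reducedOf K f C
    let N := closureOf I
    let E := N.filter fun σ => σ ∉ I ∧ f σ ≤ v
    ∀ k, relBetti N E k = bettiOf I k := by
  intro I N E k
  rw [relBetti, closureOf_reducedOf_sdiff_exit hK hf hC.1 hv]

/-- For an isolated invariant set `I = C^red` (nonempty, not a noncritical
pair) with index pair `(N, E)`, `dim H_k(N, E; ℤ/2) = b_k(C^red)` for every `k`; i.e.
the homological Conley index `C_t(I)` equals the Poincaré polynomial `P_t(C^red)`. -/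
theorem statement16 (K : Finset (Finset ℕ)) (hK : IsComplex K) (f : Finset ℕ → ℝ)
    (hf : IsMorseBott K f) (C : Finset (Finset ℕ)) (hC : IsCollection K f C)
    (v : ℝ) (hv : ∀ τ ∈ C, f τ = v)
    (hne : (reducedOf K f C).Nonempty) (hnp : ¬ IsNoncritPair f (reducedOf K f C)) :
    let I := reducedOf K f C
    let N := closureOf I
    let E := N.filter fun σ => σ ∉ I ∧ f σ ≤ v
    ∀ k, relBetti N E k = bettiOf I k :=
  statement16_general K hK f hf C hC v hv
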